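/- arXiv:1707.05376 — 2 statements merged into one kernel-verified Lean document; each statement's English description precedes it below -/
import Mathlib

section
/- Let (M,g) be a compact Riemannian manifold. If there exists a function φ and κ > 0 with sec_φ ≥ -κ e^{-4φ}, then for every ε > 0 there exists a function ψ with sec_ψ ≥ -ε e^{-4ψ}. Hence sup{κ : ∃φ with sec_φ ≥ κ e^{-4φ}} is either 0 or +∞, and it equals +∞ if and only if (M,g) admits a function φ with sec_φ > 0 everywhere. -/
/-!
Adding a constant `c` to `φ` leaves `sec_φ` unchanged but multiplies `e^{-4φ}` by `e^{-4c}`, so the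
set of admissible `κ` in `sec_φ ≥ κ e^{-4φ}` is closed under multiplication by positive reals.
Compactness makes it nonempty: the minimum of `e^{4φ} sec_φ` over the orthonormal pairs is
admissible for `φ`, and it is positive when `sec_φ > 0`. A nonempty subset of `ℝ` closed under
positive scaling is unbounded if it has a positive element and has supremum `0` otherwise.
-/

open Real

section PositiveScaling

variable {S : Set ℝ} (hS : ∀ κ ∈ S, ∀ t : ℝ, 0 < t → t * κ ∈ S)
include hS

theorem not_bddAbove_of_pos_mem {κ : ℝ} (hκS : κ ∈ S) (hκ : 0 < κ) : ¬ BddAbove S := by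
  rintro ⟨b, hb⟩
  have hmem := hS κ hκS ((|b| + 1) / κ) (by positivity)
  have hb' := hb hmem
  rw [div_mul_cancel₀ _ hκ.ne'] at hb'
  linarith [le_abs_self b]

theorem nonpos_of_mem_of_bddAbove (hB : BddAbove S) {κ : ℝ} (hκS : κ ∈ S) : κ ≤ 0 :=
  not_lt.mp fun hκ => not_bddAbove_of_pos_mem hS hκS hκ hB

theorem isLUB_zero_of_bddAbove (hne : S.Nonempty) (hB : BddAbove S) : IsLUB S 0 := by
  refine ⟨fun κ => nonpos_of_mem_of_bddAbove hS hB, fun u hu => ?_⟩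
  obtain ⟨m, hmS⟩ := hne
  rcases (nonpos_of_mem_of_bddAbove hS hB hmS).lt_or_eq with hm | rfl
  · by_contra! hu0
    -- scaling `m` by `u / (2m)` lands on `u / 2 > u`
    have hmem := hS m hmS (u / (2 * m)) (div_pos_of_neg_of_neg hu0 (by linarith))
    have hhalf : u / (2 * m) * m = u / 2 := by field_simp [hm.ne]
    linarith [hu hmem]
  · exact hu hmS

end PositiveScaling

theorem mul_exp_neg_four_mul_le_iff (κ s x : ℝ) :
    κ * exp (-4 * x) ≤ s ↔ κ ≤ s * exp (4 * x) := by
  rw [show -4 * x = -(4 * x) by ring, exp_neg, ← div_eq_mul_inv, div_le_iff₀ (exp_pos _)]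

theorem exp_neg_four_mul_add_log_div_four (x : ℝ) {t : ℝ} (ht : 0 < t) :
    exp (-4 * (x + log t / 4)) = exp (-4 * x) / t := by
  rw [show -4 * (x + log t / 4) = -4 * x - log t by ring, exp_sub, exp_log ht]

section WeightedCurvature

variable {M OP : Type*} (basept : OP → M) (secw : (M → ℝ) → OP → ℝ)

def weightedSecLowerBounds : Set ℝ :=
  {κ | ∃ φ : M → ℝ, ∀ o, κ * exp (-4 * φ (basept o)) ≤ secw φ o}

variable {basept secw}

theorem weightedSecLowerBound_shift
    (hshift : ∀ (φ : M → ℝ) (c : ℝ), secw (fun x => φ x + c) = secw φ)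
    {κ t : ℝ} (ht : 0 < t) {φ : M → ℝ} (hφ : ∀ o, κ * exp (-4 * φ (basept o)) ≤ secw φ o) :
    ∀ o, t * κ * exp (-4 * (φ (basept o) + log t / 4)) ≤ secw (fun x => φ x + log t / 4) o := by
  intro o
  rw [hshift, exp_neg_four_mul_add_log_div_four _ ht]
  convert hφ o using 1
  field_simp

theorem mul_mem_weightedSecLowerBounds
    (hshift : ∀ (φ : M → ℝ) (c : ℝ), secw (fun x => φ x + c) = secw φ) :
    ∀ κ ∈ weightedSecLowerBounds basept secw, ∀ t : ℝ, 0 < t →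
      t * κ ∈ weightedSecLowerBounds basept secw :=
  fun _ ⟨φ, hφ⟩ t ht => ⟨fun x => φ x + log t / 4, weightedSecLowerBound_shift hshift ht hφ⟩

theorem exists_min_mem_weightedSecLowerBounds [TopologicalSpace OP] [CompactSpace OP]
    [Nonempty OP] (φ : M → ℝ) (hφ : Continuous fun o => secw φ o * exp (4 * φ (basept o))) :
    ∃ o₀, secw φ o₀ * exp (4 * φ (basept o₀)) ∈ weightedSecLowerBounds basept secw := by
  obtain ⟨o₀, -, hmin⟩ := isCompact_univ.exists_isMinOn Set.univ_nonempty hφ.continuousOn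
  exact ⟨o₀, φ, fun o => (mul_exp_neg_four_mul_le_iff _ _ _).mpr (hmin (Set.mem_univ o))⟩

end WeightedCurvature

/-- On a compact Riemannian manifold, if some density φ and κ > 0 give
sec_φ ≥ -κ e^{-4φ}, then for every ε > 0 some ψ gives sec_ψ ≥ -ε e^{-4ψ}; the supremum of
{κ : ∃φ, sec_φ ≥ κ e^{-4φ}} is 0 or +∞ (unboundedness), and it is +∞ iff (M,g) has PWSC,
i.e. some φ has sec_φ > 0 everywhere.
Here `OP` is the (compact, since M is compact) bundle of orthonormal pairs, `secw φ o`
is the weighted sectional curvature of the pair `o` for density `φ`; `hshift` encodes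
invariance of sec_φ under adding constants to φ, `hcont` encodes continuity in the point
of the rescaled curvature e^{4φ} sec_φ. -/
theorem stmt_1 {M OP : Type*} [TopologicalSpace OP] [CompactSpace OP] [Nonempty OP]
    (basept : OP → M)
    (secw : (M → ℝ) → OP → ℝ)
    (hshift : ∀ (φ : M → ℝ) (c : ℝ), secw (fun x => φ x + c) = secw φ)
    (hcont : ∀ φ : M → ℝ, Continuous fun o => secw φ o * Real.exp (4 * φ (basept o))) :
    (∀ κ : ℝ, 0 < κ →
        (∃ φ : M → ℝ, ∀ o, -κ * Real.exp (-4 * φ (basept o)) ≤ secw φ o) →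
        ∀ ε : ℝ, 0 < ε →
          ∃ ψ : M → ℝ, ∀ o, -ε * Real.exp (-4 * ψ (basept o)) ≤ secw ψ o) ∧
    (¬ BddAbove {κ : ℝ | ∃ φ : M → ℝ, ∀ o, κ * Real.exp (-4 * φ (basept o)) ≤ secw φ o}
        ↔ ∃ φ : M → ℝ, ∀ o, 0 < secw φ o) ∧
    (BddAbove {κ : ℝ | ∃ φ : M → ℝ, ∀ o, κ * Real.exp (-4 * φ (basept o)) ≤ secw φ o} →
      IsLUB {κ : ℝ | ∃ φ : M → ℝ, ∀ o, κ * Real.exp (-4 * φ (basept o)) ≤ secw φ o} 0) := by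
  change _ ∧ (¬ BddAbove (weightedSecLowerBounds basept secw) ↔ _) ∧
    (BddAbove (weightedSecLowerBounds basept secw) →
      IsLUB (weightedSecLowerBounds basept secw) 0)
  have hS := mul_mem_weightedSecLowerBounds (basept := basept) hshift
  refine ⟨fun κ hκ ⟨φ, hφ⟩ ε hε => ?_, ⟨fun hB => ?_, fun ⟨φ, hφ⟩ => ?_⟩, fun hB => ?_⟩
  · refine ⟨fun x => φ x + log (ε / κ) / 4, fun o => ?_⟩
    convert weightedSecLowerBound_shift hshift (div_pos hε hκ) hφ o using 2
    field_simp
  · obtain ⟨κ, ⟨φ, hφ⟩, hκ⟩ : ∃ κ ∈ weightedSecLowerBounds basept secw, 0 < κ := by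
      by_contra! h
      exact hB ⟨0, h⟩
    exact ⟨φ, fun o => (mul_pos hκ (exp_pos _)).trans_le (hφ o)⟩
  · obtain ⟨o₀, hmem⟩ := exists_min_mem_weightedSecLowerBounds φ (hcont φ)
    exact not_bddAbove_of_pos_mem hS hmem (mul_pos (hφ o₀) (exp_pos _))
  · obtain ⟨o₀, hmem⟩ := exists_min_mem_weightedSecLowerBounds (fun _ => 0) (hcont _)
    exact isLUB_zero_of_bddAbove hS ⟨_, hmem⟩ hB
end

section
/- Let (M,g,φ) be a manifold with density, and g = dr² + e^{2φ} sn_k²(s) g_{S^{n-1}} a rotationally symmetric metric, where φ = φ(r), s(r) = ∫₀^r e^{-2φ(t)} dt, and sn_k solves sn_k'' = -k·sn_k, sn_k(0)=0, sn_k'(0)=1. Then for any unit vector X orthogonal to ∂/∂r, the weighted sectional curvature satisfies sec_φ(∂/∂r, X) = k e^{-4φ}. -/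
/-- For the rotationally symmetric metric g = dr² + e^{2φ} sn_k²(s) g_{S^{n-1}}
with φ = φ(r), s(r) = ∫₀^r e^{-2φ}, and sn_k'' = -k sn_k, sn_k(0) = 0, sn_k'(0) = 1, the
radial weighted sectional curvature sec_φ(∂_r, X) = -h''/h + φ'' + (φ')², where
h = e^φ sn_k(s(r)), equals k e^{-4φ} (wherever h ≠ 0). -/
theorem stmt_16 (k : ℝ) (φ : ℝ → ℝ) (hφ : ContDiff ℝ (⊤ : ℕ∞) φ)
    (sn : ℝ → ℝ) (hsn : ContDiff ℝ 2 sn)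
    (hsn'' : ∀ x, deriv (deriv sn) x = -k * sn x)
    (hsn0 : sn 0 = 0) (hsn'0 : deriv sn 0 = 1)
    (s : ℝ → ℝ) (hs : ∀ r, s r = ∫ t in (0:ℝ)..r, Real.exp (-2 * φ t))
    (h : ℝ → ℝ) (hh : ∀ r, h r = Real.exp (φ r) * sn (s r)) :
    ∀ r : ℝ, h r ≠ 0 →
      -(deriv (deriv h) r) / h r + deriv (deriv φ) r + (deriv φ r) ^ 2 =
        k * Real.exp (-4 * φ r) := by
  have hseq : s = fun r => ∫ t in (0:ℝ)..r, Real.exp (-2 * φ t) := funext hs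
  have hheq : h = fun r => Real.exp (φ r) * sn (s r) := funext hh
  subst hheq
  have hφd : Differentiable ℝ φ := hφ.differentiable (by simp)
  have hphiInf : ContDiff ℝ ((⊤:ℕ∞) : WithTop ℕ∞) φ := hφ.of_le (by simp)
  have hφ'd : Differentiable ℝ (deriv φ) :=
    ((contDiff_infty_iff_deriv.mp hphiInf).2).differentiable (by simp)
  have hsnd : Differentiable ℝ sn := hsn.differentiable two_ne_zero
  have hsn'd : Differentiable ℝ (deriv sn) := by
    have h2 : ContDiff ℝ (1 + 1) sn := by exact_mod_cast hsn
    exact ((contDiff_succ_iff_deriv.mp h2).2.2).differentiable one_ne_zero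
  have hcont : Continuous fun t => Real.exp (-2 * φ t) := by fun_prop
  have hsder : ∀ r, HasDerivAt s (Real.exp (-2 * φ r)) r := by
    intro r
    rw [hseq]
    exact (hcont.integral_hasStrictDerivAt 0 r).hasDerivAt
  -- first derivative of h
  set F1 : ℝ → ℝ := fun r =>
    Real.exp (φ r) * deriv φ r * sn (s r) +
      Real.exp (φ r) * (deriv sn (s r) * Real.exp (-2 * φ r)) with hF1
  have hhder : ∀ r, HasDerivAt (fun r => Real.exp (φ r) * sn (s r)) (F1 r) r := by
    intro r
    have E : HasDerivAt (fun r => Real.exp (φ r)) (Real.exp (φ r) * deriv φ r) r :=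
      (hφd r).hasDerivAt.exp
    have Sc : HasDerivAt (fun r => sn (s r)) (deriv sn (s r) * Real.exp (-2 * φ r)) r :=
      (hsnd (s r)).hasDerivAt.comp r (hsder r)
    exact E.mul Sc
  have hd1 : deriv (fun r => Real.exp (φ r) * sn (s r)) = F1 :=
    funext fun r => (hhder r).deriv
  intro r hr
  have hsnne : sn (s r) ≠ 0 := by
    intro h0
    apply hr
    simp [h0]
  have hexne : Real.exp (φ r) ≠ 0 := Real.exp_ne_zero _
  -- second derivative
  have E : HasDerivAt (fun r => Real.exp (φ r)) (Real.exp (φ r) * deriv φ r) r :=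
    (hφd r).hasDerivAt.exp
  have P : HasDerivAt (deriv φ) (deriv (deriv φ) r) r := (hφ'd r).hasDerivAt
  have Sc : HasDerivAt (fun r => sn (s r)) (deriv sn (s r) * Real.exp (-2 * φ r)) r :=
    (hsnd (s r)).hasDerivAt.comp r (hsder r)
  have Sc' : HasDerivAt (fun r => deriv sn (s r))
      ((-k * sn (s r)) * Real.exp (-2 * φ r)) r := by
    have := (hsn'd (s r)).hasDerivAt.comp r (hsder r)
    rwa [hsn''] at this
  have E2 : HasDerivAt (fun r => Real.exp (-2 * φ r))
      (Real.exp (-2 * φ r) * (-2 * deriv φ r)) r := by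
    have : HasDerivAt (fun r => -2 * φ r) (-2 * deriv φ r) r := (hφd r).hasDerivAt.const_mul _
    exact this.exp
  have hF1der : HasDerivAt F1
      (((Real.exp (φ r) * deriv φ r) * deriv φ r + Real.exp (φ r) * deriv (deriv φ) r) * sn (s r)
        + (Real.exp (φ r) * deriv φ r) * (deriv sn (s r) * Real.exp (-2 * φ r))
        + ((Real.exp (φ r) * deriv φ r) * (deriv sn (s r) * Real.exp (-2 * φ r))
          + Real.exp (φ r) * (((-k * sn (s r)) * Real.exp (-2 * φ r)) * Real.exp (-2 * φ r)
            + deriv sn (s r) * (Real.exp (-2 * φ r) * (-2 * deriv φ r))))) r := by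
    exact ((E.mul P).mul Sc).add (E.mul (Sc'.mul E2))
  rw [hd1]
  rw [hF1der.deriv]
  have e2 : Real.exp (-2 * φ r) = (Real.exp (φ r))⁻¹ * (Real.exp (φ r))⁻¹ := by
    rw [← Real.exp_neg, ← Real.exp_add]; ring_nf
  have e4 : Real.exp (-4 * φ r) = Real.exp (-2 * φ r) * Real.exp (-2 * φ r) := by
    rw [← Real.exp_add]; ring_nf
  rw [e4, e2]
  field_simp
  ring
end
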